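/- Let Sp(2) = {(a, b, c, d) ∈ ℍ⁴ : |a|² + |b|² = 1, |c|² + |d|² = 1, a·conj(b) + c·conj(d) = 0}, where conj denotes quaternionic conjugation. Define for unit quaternions q the principal action (a,b,c,d) ∙ q := (a, b, c·conj(q), d·conj(q)) and the star action q ⋆ (a,b,c,d) := (q·a·conj(q), q·b·conj(q), q·c, q·d). Then: (1) both actions map Sp(2) to itself; (2) the two actions commute: (q ⋆ p) ∙ r = q ⋆ (p ∙ r) for all unit quaternions q, r and p ∈ Sp(2); and (3) both actions are free. -/

import Mathlib

open Quaternion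

/-- The Gromoll–Meyer description of `Sp(2)` as quadruples of quaternions. -/
def Sp2 : Set (Quaternion ℝ × Quaternion ℝ × Quaternion ℝ × Quaternion ℝ) :=
  {p | normSq p.1 + normSq p.2.1 = 1 ∧
       normSq p.2.2.1 + normSq p.2.2.2 = 1 ∧
       p.1 * star p.2.1 + p.2.2.1 * star p.2.2.2 = 0}

/-- The principal (bullet) action `(a,b,c,d) ∙ q = (a, b, c·conj q, d·conj q)`. -/
noncomputable def bulletAct (p : Quaternion ℝ × Quaternion ℝ × Quaternion ℝ × Quaternion ℝ)
    (q : Quaternion ℝ) : Quaternion ℝ × Quaternion ℝ × Quaternion ℝ × Quaternion ℝ :=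
  (p.1, p.2.1, p.2.2.1 * star q, p.2.2.2 * star q)

/-- The star action `q ⋆ (a,b,c,d) = (q·a·conj q, q·b·conj q, q·c, q·d)`. -/
noncomputable def starAct (q : Quaternion ℝ)
    (p : Quaternion ℝ × Quaternion ℝ × Quaternion ℝ × Quaternion ℝ) :
    Quaternion ℝ × Quaternion ℝ × Quaternion ℝ × Quaternion ℝ :=
  (q * p.1 * star q, q * p.2.1 * star q, q * p.2.2.1, q * p.2.2.2)

/-! `∙` multiplies `(c, d)` on the right by a unit quaternion, `⋆` conjugates `(a, b)` and
multiplies `(c, d)` on the left by a unit quaternion; norms are multiplicative and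
`(x u⁻¹)(y u⁻¹)* = x y*`, so all three equations of `Sp(2)` are preserved. Freeness is
cancellation in the division ring `ℍ`, as `(c, d) ≠ (0, 0)` on `Sp(2)`. -/

section StarMonoid

variable {R : Type*} [Monoid R] [StarMul R]

theorem mul_star_mul_star_of_mem_unitary {u : R} (hu : u ∈ unitary R) (x y : R) :
    x * star u * star (y * star u) = x * star y := by
  rw [star_mul, star_star, mul_assoc, ← mul_assoc (star u), Unitary.star_mul_self_of_mem hu,
    one_mul]

theorem mul_mul_star_mul_eq_conj (u x y : R) :
    u * x * star (u * y) = u * (x * star y) * star u := by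
  simp only [star_mul, mul_assoc]

theorem conj_mul_star_conj_of_mem_unitary {u : R} (hu : u ∈ unitary R) (x y : R) :
    u * x * star u * star (u * y * star u) = u * (x * star y) * star u := by
  rw [mul_star_mul_star_of_mem_unitary hu, mul_mul_star_mul_eq_conj]

end StarMonoid

theorem Quaternion.normSq_eq_one_of_mem_unitary {q : ℍ[ℝ]} (hq : q ∈ unitary ℍ[ℝ]) :
    normSq q = 1 := by
  rw [normSq_eq_norm_mul_self, CStarRing.norm_of_mem_unitary hq, mul_one]

theorem eq_one_of_mul_eq_left_of_ne_zero {M₀ : Type*} [MonoidWithZero M₀]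
    [IsLeftCancelMulZero M₀] {c d r : M₀}
    (hcd : c ≠ 0 ∨ d ≠ 0) (hc : c * r = c) (hd : d * r = d) : r = 1 := by
  rcases hcd with hc0 | hd0
  · exact (mul_eq_left₀ hc0).1 hc
  · exact (mul_eq_left₀ hd0).1 hd

theorem eq_one_of_mul_eq_right_of_ne_zero {M₀ : Type*} [MonoidWithZero M₀]
    [IsRightCancelMulZero M₀] {c d r : M₀}
    (hcd : c ≠ 0 ∨ d ≠ 0) (hc : r * c = c) (hd : r * d = d) : r = 1 := by
  rcases hcd with hc0 | hd0
  · exact (mul_eq_right₀ hc0).1 hc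
  · exact (mul_eq_right₀ hd0).1 hd

namespace Sp2

variable {p : ℍ[ℝ] × ℍ[ℝ] × ℍ[ℝ] × ℍ[ℝ]} {q : ℍ[ℝ]}

theorem c_ne_zero_or_d_ne_zero (hp : p ∈ Sp2) : p.2.2.1 ≠ 0 ∨ p.2.2.2 ≠ 0 := by
  by_contra! h
  simpa [h.1, h.2] using hp.2.1

theorem bulletAct_mem (hq : q ∈ unitary ℍ[ℝ]) (hp : p ∈ Sp2) : bulletAct p q ∈ Sp2 := by
  obtain ⟨hab, hcd, horth⟩ := hp
  have hq' : normSq (star q) = 1 := by rw [normSq_star, normSq_eq_one_of_mem_unitary hq]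
  refine ⟨hab, ?_, ?_⟩
  · simpa only [bulletAct, map_mul, hq', mul_one] using hcd
  · simpa only [bulletAct, mul_star_mul_star_of_mem_unitary hq] using horth

theorem starAct_mem (hq : q ∈ unitary ℍ[ℝ]) (hp : p ∈ Sp2) : starAct q p ∈ Sp2 := by
  obtain ⟨hab, hcd, horth⟩ := hp
  have hq₁ := normSq_eq_one_of_mem_unitary hq
  have hq' : normSq (star q) = 1 := by rw [normSq_star, hq₁]
  refine ⟨?_, ?_, ?_⟩
  · simpa only [starAct, map_mul, hq₁, hq', one_mul, mul_one] using hab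
  · simpa only [starAct, map_mul, hq₁, one_mul] using hcd
  · simp only [starAct, conj_mul_star_conj_of_mem_unitary hq, mul_mul_star_mul_eq_conj,
      ← add_mul, ← mul_add, horth, mul_zero, zero_mul]

theorem eq_one_of_bulletAct_eq_self (hp : p ∈ Sp2) (h : bulletAct p q = p) : q = 1 := by
  have hq : star q = 1 := eq_one_of_mul_eq_left_of_ne_zero (c_ne_zero_or_d_ne_zero hp)
    (congrArg (·.2.2.1) h) (congrArg (·.2.2.2) h)
  simpa using congrArg star hq

theorem eq_one_of_starAct_eq_self (hp : p ∈ Sp2) (h : starAct q p = p) : q = 1 :=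
  eq_one_of_mul_eq_right_of_ne_zero (c_ne_zero_or_d_ne_zero hp)
    (congrArg (·.2.2.1) h) (congrArg (·.2.2.2) h)

end Sp2

theorem bulletAct_starAct (q r : ℍ[ℝ]) (p : ℍ[ℝ] × ℍ[ℝ] × ℍ[ℝ] × ℍ[ℝ]) :
    bulletAct (starAct q p) r = starAct q (bulletAct p r) := by
  simp only [bulletAct, starAct, mul_assoc]

/-- Both Gromoll–Meyer actions preserve `Sp(2)`, they commute, and both are
free. -/
theorem gromoll_meyer_actions :
    (∀ q ∈ unitary (Quaternion ℝ), ∀ p ∈ Sp2, bulletAct p q ∈ Sp2 ∧ starAct q p ∈ Sp2) ∧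
    (∀ (q r : Quaternion ℝ)
        (p : Quaternion ℝ × Quaternion ℝ × Quaternion ℝ × Quaternion ℝ),
      bulletAct (starAct q p) r = starAct q (bulletAct p r)) ∧
    (∀ q ∈ unitary (Quaternion ℝ), ∀ p ∈ Sp2, bulletAct p q = p → q = 1) ∧
    (∀ q ∈ unitary (Quaternion ℝ), ∀ p ∈ Sp2, starAct q p = p → q = 1) :=
  ⟨fun _ hq _ hp => ⟨Sp2.bulletAct_mem hq hp, Sp2.starAct_mem hq hp⟩, bulletAct_starAct,
    fun _ _ _ hp => Sp2.eq_one_of_bulletAct_eq_self hp,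
    fun _ _ _ hp => Sp2.eq_one_of_starAct_eq_self hp⟩
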